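/- If w is a nonnegative locally integrable function on ℝ^n with M(w)(x) < ∞ for almost every x, then for every 0 < δ < 1 the function (M(w))^δ is an A₁ weight, with A₁ constant depending only on n and δ (independent of w). -/

import Mathlib

open MeasureTheory ENNReal

noncomputable section

/-- A cube in `ℝⁿ` with center `c` and side length `r`. -/
def cube (n : ℕ) (c : EuclideanSpace ℝ (Fin n)) (r : ℝ) : Set (EuclideanSpace ℝ (Fin n)) :=
  {x | ∀ i, |x i - c i| ≤ r / 2}

/-- The Hardy–Littlewood maximal function over cubes centered at `x`. -/
def cubeMaximal (n : ℕ) (f : EuclideanSpace ℝ (Fin n) → ℝ≥0∞)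
    (x : EuclideanSpace ℝ (Fin n)) : ℝ≥0∞ :=
  ⨆ (r : ℝ) (_ : 0 < r), (ENNReal.ofReal (r ^ (n : ℝ)))⁻¹ * ∫⁻ y in cube n x r, f y

/-!
Fix a cube `Q` of side `r` centred at `x` and split `g = g 1_{2Q} + g 1_{(2Q)ᶜ}`. A cube centred
at a point of `Q` that meets `(2Q)ᶜ` has side `s > r` and lies in the cube of side `2s` centred
at `x`, so `M (g 1_{(2Q)ᶜ}) ≤ 2ⁿ M g x` on `Q`. For the local part, the weak type `(1,1)` bound
for `M` (Vitali covering, enlargement factor `5`) gives `|{M (g 1_{2Q}) > t}| ≤ 10ⁿ M g x |Q| / t`,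
and Kolmogorov's inequality turns such a weak bound into `⨍_Q (M (g 1_{2Q}))^δ ≲ (10ⁿ M g x)^δ`
for `δ < 1`. Since `(a + b)^δ ≤ a^δ + b^δ`, averaging over `Q` bounds `⨍_Q (M g)^δ` by a
multiple of `(M g x)^δ`, and the supremum over `Q` is `M ((M g)^δ) x`.
-/

open Filter Topology

variable {n : ℕ}

theorem mem_cube_self {c : EuclideanSpace ℝ (Fin n)} {r : ℝ} (hr : 0 ≤ r) : c ∈ cube n c r :=
  fun i => by simpa using div_nonneg hr zero_le_two

theorem cube_mono {c : EuclideanSpace ℝ (Fin n)} {r s : ℝ} (h : r ≤ s) :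
    cube n c r ⊆ cube n c s :=
  fun _ hx i => (hx i).trans (by linarith)

theorem cube_subset_cube_of_mem {c y : EuclideanSpace ℝ (Fin n)} {r s : ℝ}
    (hy : y ∈ cube n c r) : cube n y s ⊆ cube n c (s + r) := fun z hz i => by
  linarith [abs_sub_le (z i) (y i) (c i), hz i, hy i]

theorem cube_subset_of_inter_nonempty {y z : EuclideanSpace ℝ (Fin n)} {s t : ℝ}
    (h : (cube n y s ∩ cube n z t).Nonempty) : cube n y s ⊆ cube n z (2 * s + t) := by
  obtain ⟨p, hpy, hpz⟩ := h
  intro q hq i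
  linarith [abs_sub_le (q i) (p i) (z i), abs_sub_le (q i) (y i) (p i), abs_sub_comm (y i) (p i),
    hq i, hpy i, hpz i]

theorem isClosed_cube {c : EuclideanSpace ℝ (Fin n)} {r : ℝ} : IsClosed (cube n c r) := by
  simp only [cube, Set.ofPred_forall]
  exact isClosed_iInter fun i => isClosed_le (by fun_prop) continuous_const

theorem measurableSet_cube {c : EuclideanSpace ℝ (Fin n)} {r : ℝ} :
    MeasurableSet (cube n c r) :=
  isClosed_cube.measurableSet

theorem cube_eq_preimage_pi {c : EuclideanSpace ℝ (Fin n)} {r : ℝ} :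
    cube n c r = WithLp.ofLp ⁻¹' Set.univ.pi fun i => Set.Icc (c i - r / 2) (c i + r / 2) := by
  ext x
  simp only [cube, Set.mem_ofPred_eq, Set.mem_preimage, Set.mem_univ_pi, Set.mem_Icc,
    abs_sub_le_iff]
  exact forall_congr' fun i => by constructor <;> intro h <;> constructor <;> linarith [h.1, h.2]

theorem volume_cube (c : EuclideanSpace ℝ (Fin n)) (r : ℝ) :
    volume (cube n c r) = ENNReal.ofReal r ^ n := by
  rw [cube_eq_preimage_pi, (PiLp.volume_preserving_ofLp (Fin n)).measure_preimage
    (MeasurableSet.univ_pi fun _ => measurableSet_Icc).nullMeasurableSet, volume_pi_pi]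
  simp [Real.volume_Icc]

theorem volume_cube_ne_top (c : EuclideanSpace ℝ (Fin n)) (r : ℝ) : volume (cube n c r) ≠ ⊤ := by
  simp [volume_cube]

theorem volume_cube_ne_zero (c : EuclideanSpace ℝ (Fin n)) {r : ℝ} (hr : 0 < r) :
    volume (cube n c r) ≠ 0 := by
  simp [volume_cube, hr]

theorem volume_cube_mul (c d : EuclideanSpace ℝ (Fin n)) {a : ℝ} (ha : 0 ≤ a) (r : ℝ) :
    volume (cube n c (a * r)) = ENNReal.ofReal a ^ n * volume (cube n d r) := by
  rw [volume_cube, volume_cube, ENNReal.ofReal_mul ha, mul_pow]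

theorem cubeMaximal_eq_iSup_setLAverage (f : EuclideanSpace ℝ (Fin n) → ℝ≥0∞)
    (x : EuclideanSpace ℝ (Fin n)) :
    cubeMaximal n f x = ⨆ (r : ℝ) (_ : 0 < r), ⨍⁻ y in cube n x r, f y ∂volume := by
  refine iSup_congr fun r => iSup_congr fun hr => ?_
  rw [setLAverage_eq, volume_cube, ENNReal.div_eq_inv_mul, Real.rpow_natCast,
    ENNReal.ofReal_pow hr.le]

theorem setLAverage_le_cubeMaximal (f : EuclideanSpace ℝ (Fin n) → ℝ≥0∞)
    (x : EuclideanSpace ℝ (Fin n)) {r : ℝ} (hr : 0 < r) :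
    ⨍⁻ y in cube n x r, f y ∂volume ≤ cubeMaximal n f x := by
  rw [cubeMaximal_eq_iSup_setLAverage]
  exact le_iSup₂_of_le r hr le_rfl

theorem cubeMaximal_le {f : EuclideanSpace ℝ (Fin n) → ℝ≥0∞} {x : EuclideanSpace ℝ (Fin n)}
    {c : ℝ≥0∞} (h : ∀ r, 0 < r → ⨍⁻ y in cube n x r, f y ∂volume ≤ c) : cubeMaximal n f x ≤ c := by
  rw [cubeMaximal_eq_iSup_setLAverage]
  exact iSup₂_le h

theorem setLIntegral_cube_le (f : EuclideanSpace ℝ (Fin n) → ℝ≥0∞)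
    (x : EuclideanSpace ℝ (Fin n)) {r : ℝ} (hr : 0 < r) :
    ∫⁻ y in cube n x r, f y ≤ volume (cube n x r) * cubeMaximal n f x := by
  rw [← measure_mul_setLAverage f (volume_cube_ne_top x r)]
  gcongr
  exact setLAverage_le_cubeMaximal f x hr

theorem cubeMaximal_congr_ae {f g : EuclideanSpace ℝ (Fin n) → ℝ≥0∞} (h : f =ᵐ[volume] g) :
    cubeMaximal n f = cubeMaximal n g := by
  ext x
  simp only [cubeMaximal, lintegral_congr_ae (ae_restrict_of_ae h)]

theorem cubeMaximal_add_le {f : EuclideanSpace ℝ (Fin n) → ℝ≥0∞} (hf : Measurable f)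
    (g : EuclideanSpace ℝ (Fin n) → ℝ≥0∞) (x : EuclideanSpace ℝ (Fin n)) :
    cubeMaximal n (f + g) x ≤ cubeMaximal n f x + cubeMaximal n g x := by
  refine cubeMaximal_le fun r hr => ?_
  rw [setLAverage_eq, Pi.add_def, lintegral_add_left hf, ENNReal.add_div, ← setLAverage_eq,
    ← setLAverage_eq]
  gcongr <;> exact setLAverage_le_cubeMaximal _ x hr

theorem sub_mem_cube_zero {x y : EuclideanSpace ℝ (Fin n)} {r : ℝ} :
    y - x ∈ cube n 0 r ↔ y ∈ cube n x r := by
  simp [cube]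

theorem measurable_setLIntegral_cube {g : EuclideanSpace ℝ (Fin n) → ℝ≥0∞} (hg : Measurable g)
    (r : ℝ) : Measurable fun x => ∫⁻ y in cube n x r, g y := by
  have hS : MeasurableSet {p : EuclideanSpace ℝ (Fin n) × EuclideanSpace ℝ (Fin n) |
      p.2 ∈ cube n p.1 r} := by
    rw [show {p : EuclideanSpace ℝ (Fin n) × EuclideanSpace ℝ (Fin n) | p.2 ∈ cube n p.1 r} =
      (fun p => p.2 - p.1) ⁻¹' cube n 0 r from Set.ext fun _ => sub_mem_cube_zero.symm]
    exact measurableSet_cube.preimage (by fun_prop)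
  convert ((hg.comp measurable_snd).indicator hS).lintegral_prod_right' (ν := volume) using 1
  ext x
  rw [← lintegral_indicator measurableSet_cube]
  rfl

theorem cubeMaximal_eq_iSup_rat (g : EuclideanSpace ℝ (Fin n) → ℝ≥0∞)
    (x : EuclideanSpace ℝ (Fin n)) :
    cubeMaximal n g x = ⨆ (q : ℚ) (_ : 0 < (q : ℝ)), ⨍⁻ y in cube n x q, g y ∂volume := by
  refine le_antisymm (cubeMaximal_le fun r hr => ?_)
    (iSup₂_le fun q hq => setLAverage_le_cubeMaximal g x hq)
  obtain ⟨u, -, hru, hu⟩ := Real.exists_seq_rat_strictAnti_tendsto r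
  have hvol : Tendsto (fun j => volume (cube n x (u j))) atTop (𝓝 (volume (cube n x r))) := by
    simp only [volume_cube]
    exact ENNReal.Tendsto.pow ((ENNReal.continuous_ofReal.tendsto r).comp hu)
  rw [setLAverage_eq]
  refine le_of_tendsto' (ENNReal.Tendsto.const_div hvol (.inl (volume_cube_ne_top x r)))
    fun j => le_iSup₂_of_le (u j) (hr.trans (hru j)) ?_
  rw [setLAverage_eq]
  gcongr
  exact cube_mono (hru j).le

theorem measurable_cubeMaximal {g : EuclideanSpace ℝ (Fin n) → ℝ≥0∞} (hg : Measurable g) :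
    Measurable (cubeMaximal n g) := by
  simp only [funext (cubeMaximal_eq_iSup_rat g), setLAverage_eq, volume_cube]
  exact .iSup fun q => .iSup fun _ => (measurable_setLIntegral_cube hg q).div_const _

theorem cubeMaximal_fin_zero (f : EuclideanSpace ℝ (Fin 0) → ℝ≥0∞)
    (x : EuclideanSpace ℝ (Fin 0)) : cubeMaximal 0 f x = f x := by
  have hconst : ∀ {r : ℝ}, 0 < r → ⨍⁻ y in cube 0 x r, f y ∂volume = f x := fun hr => by
    rw [show f = fun _ => f x from funext fun y => congrArg f (Subsingleton.elim y x),
      setLAverage_const (volume_cube_ne_zero x hr) (volume_cube_ne_top x _)]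
  exact le_antisymm (cubeMaximal_le fun r hr => (hconst hr).le)
    ((hconst one_pos).symm.le.trans (setLAverage_le_cubeMaximal f x one_pos))

theorem countable_of_pairwiseDisjoint_cube {u : Set (EuclideanSpace ℝ (Fin n) × ℝ)}
    (hpos : ∀ p ∈ u, 0 < p.2) (hdisj : u.PairwiseDisjoint fun p => cube n p.1 p.2) :
    u.Countable := by
  have hcount := Measure.countable_meas_pos_of_disjoint_iUnion (μ := volume)
    (As := fun p : u => cube n p.1.1 p.1.2) (fun _ => measurableSet_cube)
    fun p q hpq => hdisj p.2 q.2 (Subtype.coe_ne_coe.2 hpq)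
  simp only [fun p : u => pos_iff_ne_zero.2 (volume_cube_ne_zero p.1.1 (hpos p p.2))] at hcount
  exact Set.countable_coe_iff.1 (Set.countable_univ_iff.1 hcount)

theorem exists_disjoint_cubes_covering (hn : n ≠ 0) {g : EuclideanSpace ℝ (Fin n) → ℝ≥0∞}
    (hfin : ∫⁻ y, g y ≠ ⊤) {t : ℝ≥0∞} (ht : t ≠ 0) :
    ∃ u : Set (EuclideanSpace ℝ (Fin n) × ℝ), u.PairwiseDisjoint (fun p => cube n p.1 p.2) ∧
      (∀ p ∈ u, 0 < p.2 ∧ t * volume (cube n p.1 p.2) < ∫⁻ y in cube n p.1 p.2, g y) ∧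
      {y | t < cubeMaximal n g y} ⊆ ⋃ p ∈ u, cube n p.1 (5 * p.2) := by
  set good := {p : EuclideanSpace ℝ (Fin n) × ℝ |
    0 < p.2 ∧ t * volume (cube n p.1 p.2) < ∫⁻ y in cube n p.1 p.2, g y}
  have hR : ∀ p ∈ good, p.2 ≤ max 1 ((∫⁻ y, g y) / t).toReal := by
    rintro p ⟨hp, hpg⟩
    have hvol : ENNReal.ofReal (p.2 ^ n) ≤ (∫⁻ y, g y) / t := by
      rw [ENNReal.ofReal_pow hp.le, ← volume_cube,
        ENNReal.le_div_iff_mul_le (.inl ht) (.inr hfin), mul_comm]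
      exact hpg.le.trans (setLIntegral_le_lintegral _ _)
    rw [ENNReal.ofReal_le_iff_le_toReal (ENNReal.div_ne_top hfin ht)] at hvol
    rcases le_or_gt p.2 1 with h1 | h1
    · exact h1.trans (le_max_left _ _)
    · exact (le_self_pow₀ h1.le hn).trans (hvol.trans (le_max_right _ _))
  obtain ⟨u, hu, hdisj, hcover⟩ := Vitali.exists_disjoint_subfamily_covering_enlargement
    (fun p => cube n p.1 p.2) good Prod.snd 2 one_lt_two (fun p hp => hp.1.le) _ hR
    fun p hp => ⟨p.1, mem_cube_self hp.1.le⟩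
  refine ⟨u, hdisj, fun p hp => hu hp, fun y hy => ?_⟩
  simp only [Set.mem_ofPred_eq, cubeMaximal_eq_iSup_setLAverage, lt_iSup_iff] at hy
  obtain ⟨r, hr, hyr⟩ := hy
  rw [setLAverage_eq, ENNReal.lt_div_iff_mul_lt (.inl (volume_cube_ne_zero y hr))
    (.inl (volume_cube_ne_top y r))] at hyr
  obtain ⟨p, hpu, hinter, hrp⟩ := hcover (y, r) ⟨hr, hyr⟩
  refine Set.mem_biUnion hpu (cube_mono ?_ (cube_subset_of_inter_nonempty hinter
    (mem_cube_self hr.le)))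
  linarith [(hu hpu).1]

theorem volume_lt_cubeMaximal_le (hn : n ≠ 0) {g : EuclideanSpace ℝ (Fin n) → ℝ≥0∞}
    (hfin : ∫⁻ y, g y ≠ ⊤) {t : ℝ≥0∞} (ht : t ≠ 0) :
    volume {y | t < cubeMaximal n g y} ≤ 5 ^ n * (∫⁻ y, g y) / t := by
  obtain ⟨u, hdisj, hgood, hcover⟩ := exists_disjoint_cubes_covering hn hfin ht
  have hcount := countable_of_pairwiseDisjoint_cube (fun p hp => (hgood p hp).1) hdisj
  have := hcount.to_subtype
  calc volume {y | t < cubeMaximal n g y}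
      ≤ ∑' p : u, volume (cube n p.1.1 (5 * p.1.2)) :=
        (measure_mono hcover).trans (measure_biUnion_le _ hcount _)
    _ ≤ ∑' p : u, 5 ^ n * ((∫⁻ y in cube n p.1.1 p.1.2, g y) / t) := by
        refine ENNReal.tsum_le_tsum fun p => ?_
        rw [volume_cube_mul _ p.1.1 (by norm_num), ENNReal.ofReal_ofNat]
        gcongr
        rw [ENNReal.le_div_iff_mul_le (.inl ht) (.inr (ne_top_of_le_ne_top hfin
          (setLIntegral_le_lintegral _ _))), mul_comm]
        exact (hgood p p.2).2.le
    _ = 5 ^ n * ((∫⁻ y in ⋃ p : u, cube n p.1.1 p.1.2, g y) / t) := by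
        simp only [div_eq_mul_inv, ENNReal.tsum_mul_left, ENNReal.tsum_mul_right]
        rw [lintegral_iUnion (s := fun p : u => cube n p.1.1 p.1.2) (fun _ => measurableSet_cube)
          fun p q hpq => hdisj p.2 q.2 (Subtype.coe_ne_coe.2 hpq)]
    _ ≤ 5 ^ n * (∫⁻ y, g y) / t := by
        rw [mul_div_assoc]
        gcongr 5 ^ n * (?_ / t)
        exact setLIntegral_le_lintegral _ _

/-- The value of `1 + 2 ^ δ * ∑' k, (2 ^ δ / 2) ^ k`; it is `⊤` for `δ ≥ 1`. -/
def kolmogorovConst (δ : ℝ) : ℝ≥0∞ := 1 + 2 ^ δ * (1 - 2 ^ δ / 2)⁻¹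

theorem kolmogorovConst_ne_top {δ : ℝ} (hδ : δ < 1) : kolmogorovConst δ ≠ ⊤ := by
  have h2δ : (2 : ℝ≥0∞) ^ δ < 2 := by
    simpa using ENNReal.rpow_lt_rpow_of_exponent_lt one_lt_two ENNReal.ofNat_ne_top hδ
  have hρ : 2 ^ δ / 2 < (1 : ℝ≥0∞) := by
    rwa [ENNReal.div_lt_iff (.inl two_ne_zero) (.inl ENNReal.ofNat_ne_top), one_mul]
  simp [kolmogorovConst, ENNReal.mul_eq_top, ENNReal.rpow_eq_top_iff, tsub_eq_zero_iff_le,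
    hρ.not_ge]

/-- Dyadic layer cake: on `{2 ^ k * c < a ≤ 2 ^ (k + 1) * c}` the `k`-th term dominates `a ^ δ`. -/
theorem rpow_le_add_sum_indicator {a c : ℝ≥0∞} {δ : ℝ} (hδ : 0 ≤ δ) {N : ℕ}
    (ha : a ≤ 2 ^ N * c) :
    a ^ δ ≤ c ^ δ + ∑ k ∈ Finset.range N,
      (Set.Ioi (2 ^ k * c)).indicator (fun _ => (2 ^ (k + 1) * c) ^ δ) a := by
  induction N with
  | zero =>
    simp only [pow_zero, one_mul] at ha
    simpa using ENNReal.rpow_le_rpow ha hδ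
  | succ N ih =>
    rw [Finset.sum_range_succ, ← add_assoc]
    rcases le_or_gt a (2 ^ N * c) with h | h
    · exact (ih h).trans le_self_add
    · rw [Set.indicator_of_mem (Set.mem_Ioi.2 h)]
      exact (ENNReal.rpow_le_rpow ha hδ).trans le_add_self

theorem rpow_le_add_tsum_indicator (a : ℝ≥0∞) {c : ℝ≥0∞} (hc : c ≠ 0) {δ : ℝ} (hδ : 0 ≤ δ) :
    a ^ δ ≤ c ^ δ + ∑' k : ℕ,
      (Set.Ioi (2 ^ k * c)).indicator (fun _ => (2 ^ (k + 1) * c) ^ δ) a := by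
  rcases le_or_gt a c with hac | hca
  · exact (ENNReal.rpow_le_rpow hac hδ).trans le_self_add
  rcases eq_or_ne a ⊤ with rfl | ha
  · have hsum : ∑' k : ℕ,
        (Set.Ioi (2 ^ k * c)).indicator (fun _ => (2 ^ (k + 1) * c) ^ δ) (⊤ : ℝ≥0∞) = ⊤ := by
      refine top_unique ((ENNReal.tsum_const_eq_top_of_ne_zero (α := ℕ)
        (ENNReal.rpow_pos (p := δ) (pos_iff_ne_zero.2 hc) hca.ne_top).ne').ge.trans
        (ENNReal.tsum_le_tsum fun k => ?_))
      rw [Set.indicator_of_mem (Set.mem_Ioi.2 (ENNReal.mul_lt_top (by simp) hca))]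
      exact ENNReal.rpow_le_rpow (le_mul_of_one_le_left' (one_le_pow₀ one_le_two)) hδ
    rw [hsum, add_top]
    exact le_top
  · obtain ⟨N, hN⟩ := ENNReal.exists_nat_gt (ENNReal.div_ne_top ha hc)
    have haN : a ≤ 2 ^ N * c := by
      rw [← ENNReal.div_le_iff_le_mul (.inl hc) (.inr (pow_ne_zero _ two_ne_zero))]
      exact hN.le.trans (by exact_mod_cast Nat.lt_two_pow_self.le)
    exact (rpow_le_add_sum_indicator hδ haN).trans (by gcongr; exact ENNReal.sum_le_tsum _)

theorem setLIntegral_rpow_le_of_weakType {α : Type*} [MeasurableSpace α] {μ : Measure α}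
    {f : α → ℝ≥0∞} (hf : Measurable f) (Q : Set α) {δ : ℝ} (hδ : 0 ≤ δ) {c : ℝ≥0∞}
    (hc0 : c ≠ 0) (hc : c ≠ ⊤)
    (hweak : ∀ t, t ≠ 0 → t ≠ ⊤ → μ {y | t < f y} ≤ c * μ Q / t) :
    ∫⁻ y in Q, f y ^ δ ∂μ ≤ kolmogorovConst δ * c ^ δ * μ Q := by
  have hterm : ∀ k : ℕ, (2 ^ (k + 1) * c) ^ δ * (c * μ Q / (2 ^ k * c))
      = 2 ^ δ * (c ^ δ * μ Q) * (2 ^ δ / 2) ^ k := by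
    intro k
    have hpow : ((2 : ℝ≥0∞) ^ (k + 1)) ^ δ = (2 ^ δ) ^ (k + 1) := by
      rw [← ENNReal.rpow_natCast 2 (k + 1), ← ENNReal.rpow_mul, mul_comm, ENNReal.rpow_mul,
        ENNReal.rpow_natCast]
    rw [mul_comm (2 ^ k) c, ENNReal.mul_div_mul_left _ _ hc0 hc,
      ENNReal.mul_rpow_of_nonneg _ _ hδ, hpow, div_eq_mul_inv, div_eq_mul_inv, mul_pow,
      ENNReal.inv_pow]
    ring
  calc ∫⁻ y in Q, f y ^ δ ∂μ
      ≤ ∫⁻ y in Q, c ^ δ + ∑' k : ℕ, (f ⁻¹' Set.Ioi (2 ^ k * c)).indicator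
          (fun _ => (2 ^ (k + 1) * c) ^ δ) y ∂μ :=
        lintegral_mono fun y => rpow_le_add_tsum_indicator (f y) hc0 hδ
    _ = c ^ δ * μ Q
          + ∑' k : ℕ, (2 ^ (k + 1) * c) ^ δ * μ.restrict Q (f ⁻¹' Set.Ioi (2 ^ k * c)) := by
        rw [lintegral_add_left measurable_const, lintegral_const, Measure.restrict_apply_univ,
          lintegral_tsum fun k => (measurable_const.indicator (hf measurableSet_Ioi)).aemeasurable]
        simp only [lintegral_indicator_const (hf measurableSet_Ioi)]
    _ ≤ c ^ δ * μ Q + ∑' k : ℕ, (2 ^ (k + 1) * c) ^ δ * (c * μ Q / (2 ^ k * c)) := by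
        gcongr with k
        exact (Measure.restrict_apply_le _ _).trans
          (hweak _ (by simp [hc0]) (ENNReal.mul_ne_top (by simp) hc))
    _ = kolmogorovConst δ * c ^ δ * μ Q := by
        simp only [hterm, ENNReal.tsum_mul_left, ENNReal.tsum_geometric, kolmogorovConst]
        ring

theorem setLAverage_cubeMaximal_rpow_le (hn : n ≠ 0) {δ : ℝ} (hδ : 0 < δ)
    {g : EuclideanSpace ℝ (Fin n) → ℝ≥0∞} (hg : Measurable g) (hfin : ∫⁻ y, g y ≠ ⊤)
    (x : EuclideanSpace ℝ (Fin n)) {r : ℝ} (hr : 0 < r) :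
    ⨍⁻ y in cube n x r, cubeMaximal n g y ^ δ ∂volume
      ≤ kolmogorovConst δ * (5 ^ n * (∫⁻ y, g y) / volume (cube n x r)) ^ δ := by
  have hQ0 := volume_cube_ne_zero x hr
  have hQ := volume_cube_ne_top x r
  rcases eq_or_ne (∫⁻ y, g y) 0 with h0 | h0
  · have hM : cubeMaximal n g = 0 := by
      rw [cubeMaximal_congr_ae ((lintegral_eq_zero_iff hg).1 h0)]
      ext y
      simp [cubeMaximal]
    simp [hM, ENNReal.zero_rpow_of_pos hδ]
  set c := 5 ^ n * (∫⁻ y, g y) / volume (cube n x r)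
  have hc0 : c ≠ 0 := by simp [c, ENNReal.div_eq_zero_iff, h0, hQ]
  have hc : c ≠ ⊤ := ENNReal.div_ne_top (ENNReal.mul_ne_top (by simp) hfin) hQ0
  have hcQ : c * volume (cube n x r) = 5 ^ n * ∫⁻ y, g y := ENNReal.div_mul_cancel hQ0 hQ
  rw [setLAverage_eq, ENNReal.div_le_iff hQ0 hQ]
  exact setLIntegral_rpow_le_of_weakType (measurable_cubeMaximal hg) _ hδ.le hc0 hc
    fun t ht0 _ => hcQ ▸ volume_lt_cubeMaximal_le hn hfin ht0

theorem cubeMaximal_indicator_compl_le (g : EuclideanSpace ℝ (Fin n) → ℝ≥0∞)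
    {x y : EuclideanSpace ℝ (Fin n)} {r : ℝ} (hy : y ∈ cube n x r) :
    cubeMaximal n ((cube n x (2 * r))ᶜ.indicator g) y ≤ 2 ^ n * cubeMaximal n g x := by
  refine cubeMaximal_le fun s hs => ?_
  rw [setLAverage_eq, ENNReal.div_le_iff (volume_cube_ne_zero y hs) (volume_cube_ne_top y s)]
  rcases le_or_gt s r with hsr | hsr
  · have hsub : cube n y s ⊆ cube n x (2 * r) :=
      (cube_subset_cube_of_mem hy).trans (cube_mono (by linarith))
    have hzero : ∫⁻ z in cube n y s, (cube n x (2 * r))ᶜ.indicator g z ∂volume = 0 := by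
      rw [setLIntegral_congr_fun measurableSet_cube fun z hz =>
        Set.indicator_of_notMem (Set.notMem_compl_iff.2 (hsub hz)) g]
      exact lintegral_zero
    simp [hzero]
  · calc ∫⁻ z in cube n y s, (cube n x (2 * r))ᶜ.indicator g z
        ≤ ∫⁻ z in cube n x (2 * s), g z :=
          (lintegral_mono fun z => Set.indicator_le_self _ _ z).trans
            (lintegral_mono_set ((cube_subset_cube_of_mem hy).trans (cube_mono (by linarith))))
      _ ≤ volume (cube n x (2 * s)) * cubeMaximal n g x := setLIntegral_cube_le g x (by positivity)
      _ = 2 ^ n * cubeMaximal n g x * volume (cube n y s) := by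
          rw [volume_cube_mul x y zero_le_two, ENNReal.ofReal_ofNat]
          ring

def a1Const (n : ℕ) (δ : ℝ) : ℝ≥0∞ := kolmogorovConst δ * (10 ^ n) ^ δ + (2 ^ n) ^ δ

theorem one_le_a1Const (n : ℕ) {δ : ℝ} (hδ : 0 < δ) : 1 ≤ a1Const n δ :=
  (ENNReal.one_le_rpow (one_le_pow₀ one_le_two) hδ).trans le_add_self

theorem a1Const_ne_top (n : ℕ) {δ : ℝ} (hδ0 : 0 ≤ δ) (hδ1 : δ < 1) : a1Const n δ ≠ ⊤ := by
  simp [a1Const, ENNReal.mul_eq_top, kolmogorovConst_ne_top hδ1,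
    ENNReal.rpow_ne_top_of_nonneg hδ0]

theorem cubeMaximal_rpow_le_add_indicator {δ : ℝ} (hδ0 : 0 ≤ δ) (hδ1 : δ ≤ 1)
    {g : EuclideanSpace ℝ (Fin n) → ℝ≥0∞} (hg : Measurable g) {s : Set (EuclideanSpace ℝ (Fin n))}
    (hs : MeasurableSet s) (y : EuclideanSpace ℝ (Fin n)) :
    cubeMaximal n g y ^ δ
      ≤ cubeMaximal n (s.indicator g) y ^ δ + cubeMaximal n (sᶜ.indicator g) y ^ δ := by
  refine (ENNReal.rpow_le_rpow ?_ hδ0).trans (ENNReal.rpow_add_le_add_rpow _ _ hδ0 hδ1)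
  simpa only [Set.indicator_self_add_compl] using
    cubeMaximal_add_le (hg.indicator hs) (sᶜ.indicator g) y

theorem setLAverage_cubeMaximal_indicator_rpow_le (hn : n ≠ 0) {δ : ℝ} (hδ : 0 < δ)
    {g : EuclideanSpace ℝ (Fin n) → ℝ≥0∞} (hg : Measurable g) {x : EuclideanSpace ℝ (Fin n)}
    (hx : cubeMaximal n g x ≠ ⊤) {r : ℝ} (hr : 0 < r) :
    ⨍⁻ y in cube n x r, cubeMaximal n ((cube n x (2 * r)).indicator g) y ^ δ ∂volume
      ≤ kolmogorovConst δ * (10 ^ n) ^ δ * cubeMaximal n g x ^ δ := by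
  have hint : ∫⁻ y, (cube n x (2 * r)).indicator g y
      ≤ volume (cube n x (2 * r)) * cubeMaximal n g x := by
    rw [lintegral_indicator measurableSet_cube]
    exact setLIntegral_cube_le g x (by positivity)
  have hfin : ∫⁻ y, (cube n x (2 * r)).indicator g y ≠ ⊤ :=
    ne_top_of_le_ne_top (ENNReal.mul_ne_top (volume_cube_ne_top x _) hx) hint
  have hkol := setLAverage_cubeMaximal_rpow_le hn hδ (hg.indicator measurableSet_cube) hfin x hr
  refine hkol.trans ?_
  rw [mul_assoc, ← ENNReal.mul_rpow_of_nonneg _ _ hδ.le]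
  gcongr
  refine ENNReal.div_le_of_le_mul ?_
  calc 5 ^ n * ∫⁻ y, (cube n x (2 * r)).indicator g y
      ≤ 5 ^ n * (volume (cube n x (2 * r)) * cubeMaximal n g x) := by gcongr
    _ = 10 ^ n * cubeMaximal n g x * volume (cube n x r) := by
        rw [volume_cube_mul x x zero_le_two, ENNReal.ofReal_ofNat,
          show (10 : ℝ≥0∞) ^ n = 5 ^ n * 2 ^ n by rw [← mul_pow]; norm_num]
        ring

theorem setLAverage_cubeMaximal_indicator_compl_rpow_le {δ : ℝ} (hδ : 0 ≤ δ)
    (g : EuclideanSpace ℝ (Fin n) → ℝ≥0∞) (x : EuclideanSpace ℝ (Fin n)) (r : ℝ) :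
    ⨍⁻ y in cube n x r, cubeMaximal n ((cube n x (2 * r))ᶜ.indicator g) y ^ δ ∂volume
      ≤ (2 ^ n) ^ δ * cubeMaximal n g x ^ δ := by
  rw [setLAverage_eq]
  refine ENNReal.div_le_of_le_mul ((setLIntegral_mono' measurableSet_cube fun y hy =>
    (ENNReal.rpow_le_rpow (cubeMaximal_indicator_compl_le g hy) hδ).trans_eq
      (ENNReal.mul_rpow_of_nonneg _ _ hδ)).trans_eq ?_)
  exact setLIntegral_const _ _

theorem setLAverage_cubeMaximal_rpow_le_a1Const (hn : n ≠ 0) {δ : ℝ} (hδ0 : 0 < δ)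
    (hδ1 : δ ≤ 1) {g : EuclideanSpace ℝ (Fin n) → ℝ≥0∞} (hg : Measurable g)
    {x : EuclideanSpace ℝ (Fin n)} (hx : cubeMaximal n g x ≠ ⊤) {r : ℝ} (hr : 0 < r) :
    ⨍⁻ y in cube n x r, cubeMaximal n g y ^ δ ∂volume ≤ a1Const n δ * cubeMaximal n g x ^ δ := by
  set Q₂ := cube n x (2 * r)
  have hQ₂ : MeasurableSet Q₂ := measurableSet_cube
  calc ⨍⁻ y in cube n x r, cubeMaximal n g y ^ δ ∂volume
      ≤ ⨍⁻ y in cube n x r, cubeMaximal n (Q₂.indicator g) y ^ δ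
          + cubeMaximal n (Q₂ᶜ.indicator g) y ^ δ ∂volume :=
        setLAverage_mono_ae _ (.of_forall (cubeMaximal_rpow_le_add_indicator hδ0.le hδ1 hg hQ₂))
    _ = ⨍⁻ y in cube n x r, cubeMaximal n (Q₂.indicator g) y ^ δ ∂volume
          + ⨍⁻ y in cube n x r, cubeMaximal n (Q₂ᶜ.indicator g) y ^ δ ∂volume := by
        simp only [setLAverage_eq, ENNReal.add_div,
          lintegral_add_left ((measurable_cubeMaximal (hg.indicator hQ₂)).pow_const δ)]
    _ ≤ a1Const n δ * cubeMaximal n g x ^ δ := by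
        rw [a1Const, add_mul]
        exact add_le_add (setLAverage_cubeMaximal_indicator_rpow_le hn hδ0 hg hx hr)
          (setLAverage_cubeMaximal_indicator_compl_rpow_le hδ0.le g x r)

theorem cubeMaximal_cubeMaximal_rpow_le {δ : ℝ} (hδ0 : 0 < δ) (hδ1 : δ ≤ 1)
    {g : EuclideanSpace ℝ (Fin n) → ℝ≥0∞} (hg : Measurable g)
    {x : EuclideanSpace ℝ (Fin n)} (hx : cubeMaximal n g x ≠ ⊤) :
    cubeMaximal n (fun y => cubeMaximal n g y ^ δ) x ≤ a1Const n δ * cubeMaximal n g x ^ δ := by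
  rcases eq_or_ne n 0 with rfl | hn
  · rw [cubeMaximal_fin_zero]
    exact le_mul_of_one_le_left' (one_le_a1Const 0 hδ0)
  · exact cubeMaximal_le fun r hr =>
      setLAverage_cubeMaximal_rpow_le_a1Const hn hδ0 hδ1 hg hx hr

/-- If `M(w) < ∞` a.e., then for `0 < δ < 1` the function `(M w)^δ` is an `A₁` weight,
with `A₁` constant depending only on `n` and `δ`. -/
theorem maximal_rpow_A1 (n : ℕ) (δ : ℝ) (hδ0 : 0 < δ) (hδ1 : δ < 1) :
    ∃ C > (0:ℝ), ∀ w : EuclideanSpace ℝ (Fin n) → ℝ, (∀ x, 0 ≤ w x) →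
      LocallyIntegrable w volume →
      (∀ᵐ x ∂volume, cubeMaximal n (fun y => ENNReal.ofReal (w y)) x < ⊤) →
      ∀ᵐ x ∂volume,
        cubeMaximal n (fun y => cubeMaximal n (fun z => ENNReal.ofReal (w z)) y ^ δ) x ≤
          ENNReal.ofReal C * cubeMaximal n (fun y => ENNReal.ofReal (w y)) x ^ δ := by
  have hC := a1Const_ne_top n hδ0.le hδ1
  have hC0 : a1Const n δ ≠ 0 := (zero_lt_one.trans_le (one_le_a1Const n hδ0)).ne'
  refine ⟨(a1Const n δ).toReal, ENNReal.toReal_pos hC0 hC, ?_⟩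
  intro w _ hw hfin
  have hwm := hw.aestronglyMeasurable.aemeasurable.ennreal_ofReal
  rw [cubeMaximal_congr_ae hwm.ae_eq_mk] at hfin ⊢
  filter_upwards [hfin] with x hx
  rw [ENNReal.ofReal_toReal hC]
  exact cubeMaximal_cubeMaximal_rpow_le hδ0 hδ1.le hwm.measurable_mk hx.ne
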